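/- arXiv:1709.10227 — 6 statements merged into one kernel-verified Lean document; each statement's English description precedes it below -/
import Mathlib

section
/- (Frank–Wolfe-type existence theorem) Assume D ∩ dom f is nonempty. Then there exists x̄ ∈ D with f(x̄) finite and f(x̄) ≤ f(x) for all x ∈ D if and only if there exists a real number γ such that f(x) ≥ γ for every x ∈ D. -/
/-!
By Fourier–Motzkin elimination, projecting a polyhedral set (one cut out by finitely many linear
inequalities) along finitely many real coordinates gives a polyhedral set. Hence the image of a
polyhedral set under a linear map into a finite-dimensional space is polyhedral, hence closed.
After translating by a feasible point into `ker A ∩ ker B`, the set of values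
`{t | ∃ x ∈ D ∩ dom f, f x ≤ t}` is such an image in `ℝ`: a closed half-line when `f` is bounded
below on `D`, whose endpoint is therefore a value of `f`.
-/

theorem exists_mem_upperBounds_lowerBounds_of_finite {α : Type*}
    [ConditionallyCompleteLinearOrder α] [Nonempty α] {s t : Set α} (hs : s.Finite)
    (ht : t.Finite) (hst : ∀ a ∈ s, ∀ b ∈ t, a ≤ b) :
    ∃ c, c ∈ upperBounds s ∧ c ∈ lowerBounds t := by
  rcases s.eq_empty_or_nonempty with rfl | hne
  · obtain ⟨c, hc⟩ := ht.bddBelow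
    exact ⟨c, by simp, hc⟩
  · exact ⟨sSup s, fun a ha => le_csSup hs.bddAbove ha,
      fun b hb => csSup_le hne fun a ha => hst a ha b hb⟩

theorem exists_forall_mul_le_iff {ι : Type*} [Finite ι] (a b : ι → ℝ) :
    (∃ t : ℝ, ∀ i, t * a i ≤ b i) ↔
      (∀ i, a i = 0 → 0 ≤ b i) ∧ ∀ i j, 0 < a i → a j < 0 → a j * b i ≤ a i * b j := by
  constructor
  · rintro ⟨t, ht⟩
    refine ⟨fun i hi => by simpa [hi] using ht i, fun i j hi hj => ?_⟩
    nlinarith [mul_le_mul_of_nonneg_left (ht i) (neg_nonneg.2 hj.le),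
      mul_le_mul_of_nonneg_left (ht j) hi.le]
  · rintro ⟨hzero, hpair⟩
    obtain ⟨t, hlower, hupper⟩ := exists_mem_upperBounds_lowerBounds_of_finite
      ((Set.finite_range fun j : {j // a j < 0} => b j / a j))
      ((Set.finite_range fun i : {i // 0 < a i} => b i / a i))
      (by
        rintro _ ⟨⟨j, hj⟩, rfl⟩ _ ⟨⟨i, hi⟩, rfl⟩
        dsimp only
        rw [← neg_div_neg_eq, div_le_div_iff₀ (neg_pos.2 hj) hi]
        linarith [hpair i j hi hj])
    refine ⟨t, fun i => ?_⟩
    rcases lt_trichotomy (a i) 0 with hi | hi | hi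
    · exact (div_le_iff_of_neg hi).1 (hlower ⟨⟨i, hi⟩, rfl⟩)
    · simpa [hi] using hzero i hi
    · exact (le_div_iff₀ hi).1 (hupper ⟨⟨i, hi⟩, rfl⟩)

def IsPolyhedral {V : Type*} [AddCommGroup V] [Module ℝ V] (S : Set V) : Prop :=
  ∃ (ι : Type) (_ : Finite ι) (f : ι → V →ₗ[ℝ] ℝ) (c : ι → ℝ), S = {x | ∀ i, f i x ≤ c i}

section

variable {V W : Type*} [AddCommGroup V] [Module ℝ V] [AddCommGroup W] [Module ℝ W]

theorem isPolyhedral_setOf_forall_le {ι : Type*} [Finite ι] (f : ι → V →ₗ[ℝ] ℝ) (c : ι → ℝ) :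
    IsPolyhedral {x | ∀ i, f i x ≤ c i} := by
  obtain ⟨n, ⟨e⟩⟩ := Finite.exists_equiv_fin ι
  refine ⟨Fin n, inferInstance, f ∘ e.symm, c ∘ e.symm, ?_⟩
  ext x
  exact e.symm.forall_congr_right.symm

namespace IsPolyhedral

variable {S T : Set V}

theorem inter (hS : IsPolyhedral S) (hT : IsPolyhedral T) : IsPolyhedral (S ∩ T) := by
  obtain ⟨ι, _, f, c, rfl⟩ := hS
  obtain ⟨κ, _, g, d, rfl⟩ := hT
  refine ⟨ι ⊕ κ, inferInstance, Sum.elim f g, Sum.elim c d, ?_⟩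
  ext x
  simp [Sum.forall]

theorem preimage (hS : IsPolyhedral S) (L : W →ₗ[ℝ] V) : IsPolyhedral (L ⁻¹' S) := by
  obtain ⟨ι, _, f, c, rfl⟩ := hS
  exact ⟨ι, inferInstance, fun i => (f i).comp L, c, rfl⟩

theorem preimage_add_left (hS : IsPolyhedral S) (x₀ : V) : IsPolyhedral ((x₀ + ·) ⁻¹' S) := by
  obtain ⟨ι, _, f, c, rfl⟩ := hS
  refine ⟨ι, inferInstance, f, fun i => c i - f i x₀, ?_⟩
  ext x
  simp [le_sub_iff_add_le']

/-- Fourier–Motzkin elimination of one real variable. -/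
theorem image_fst_real {S : Set (V × ℝ)} (hS : IsPolyhedral S) :
    IsPolyhedral (Prod.fst '' S) := by
  obtain ⟨ι, _, f, c, rfl⟩ := hS
  set g : ι → V →ₗ[ℝ] ℝ := fun i => (f i).comp (LinearMap.inl ℝ V ℝ)
  set a : ι → ℝ := fun i => f i (0, 1)
  have hf : ∀ i v t, f i (v, t) = g i v + t * a i := fun i v t => by
    have hvt : (v, t) = (v, (0 : ℝ)) + t • ((0 : V), (1 : ℝ)) := by simp
    rw [hvt, map_add, map_smul, smul_eq_mul]
    rfl
  have key : Prod.fst '' {x | ∀ i, f i x ≤ c i} =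
      {v | ∀ i : {i // a i = 0}, g i v ≤ c i} ∩
        {v | ∀ ij : {ij : ι × ι // 0 < a ij.1 ∧ a ij.2 < 0},
          (a ij.1.1 • g ij.1.2 - a ij.1.2 • g ij.1.1) v ≤
            a ij.1.1 * c ij.1.2 - a ij.1.2 * c ij.1.1} := by
    ext v
    have := exists_forall_mul_le_iff a fun i => c i - g i v
    simp only [Set.mem_image, Prod.exists, exists_and_right, exists_eq_right, Set.mem_ofPred_eq,
      hf, Set.mem_inter_iff, Subtype.forall, Prod.forall, LinearMap.sub_apply,
      LinearMap.smul_apply, smul_eq_mul] at this ⊢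
    refine (exists_congr fun t => forall_congr' fun i => le_sub_iff_add_le'.symm).trans
      (this.trans (and_congr (forall₂_congr fun i _ => sub_nonneg) (forall₂_congr fun i j => ?_)))
    exact ⟨fun h hij => by linarith [h hij.1 hij.2], fun h hi hj => by linarith [h ⟨hi, hj⟩]⟩
  rw [key]
  exact (isPolyhedral_setOf_forall_le _ _).inter (isPolyhedral_setOf_forall_le _ _)

theorem image_fst_fin (n : ℕ) {S : Set (V × (Fin n → ℝ))} (hS : IsPolyhedral S) :
    IsPolyhedral (Prod.fst '' S) := by
  induction n generalizing V with
  | zero =>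
    have : Prod.fst '' S = LinearMap.inl ℝ V (Fin 0 → ℝ) ⁻¹' S := by
      ext v
      simp only [Set.mem_image, Set.mem_preimage, LinearMap.inl_apply, Prod.exists,
        exists_and_right, exists_eq_right]
      exact ⟨fun ⟨w, hw⟩ => Subsingleton.elim w 0 ▸ hw, fun hv => ⟨0, hv⟩⟩
    exact this ▸ hS.preimage _
  | succ n ih =>
    let e := (LinearEquiv.prodAssoc ℝ V _ ℝ).trans ((LinearEquiv.refl ℝ V).prodCongr
        ((LinearEquiv.prodComm ℝ _ ℝ).trans (Fin.consLinearEquiv ℝ fun _ : Fin (n + 1) => ℝ)))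
    have : Prod.fst '' S = Prod.fst '' (Prod.fst '' (e ⁻¹' S)) := by
      rw [← e.image_symm_eq_preimage, Set.image_image, Set.image_image]
      rfl
    exact this ▸ ih (hS.preimage e.toLinearMap).image_fst_real

theorem image_fst_pi {ι : Type*} [Finite ι] {S : Set (V × (ι → ℝ))} (hS : IsPolyhedral S) :
    IsPolyhedral (Prod.fst '' S) := by
  obtain ⟨n, ⟨e⟩⟩ := Finite.exists_equiv_fin ι
  let L := (LinearEquiv.refl ℝ V).prodCongr (LinearEquiv.funCongrLeft ℝ ℝ e)
  have : Prod.fst '' S = Prod.fst '' (L ⁻¹' S) := by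
    rw [← L.image_symm_eq_preimage, Set.image_image]
    rfl
  exact this ▸ image_fst_fin n (hS.preimage L.toLinearMap)

end IsPolyhedral

theorem Submodule.isPolyhedral (U : Submodule ℝ V) [FiniteDimensional ℝ (V ⧸ U)] :
    IsPolyhedral (U : Set V) := by
  let b := Module.finBasis ℝ (V ⧸ U)
  let φ : Fin (Module.finrank ℝ (V ⧸ U)) → V →ₗ[ℝ] ℝ := fun i => (b.coord i).comp U.mkQ
  refine ⟨_ ⊕ _, inferInstance, Sum.elim φ (-φ), 0, ?_⟩
  ext x
  simp only [SetLike.mem_coe, Set.mem_ofPred_eq, Sum.forall, Sum.elim_inl, Sum.elim_inr,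
    Pi.zero_apply, Pi.neg_apply, LinearMap.neg_apply, neg_nonpos, ← le_antisymm_iff, ← forall_and]
  rw [← Submodule.Quotient.mk_eq_zero U, ← b.forall_coord_eq_zero_iff]
  rfl

theorem IsPolyhedral.image_linearMap [FiniteDimensional ℝ W] {S : Set V} (hS : IsPolyhedral S)
    (L : V →ₗ[ℝ] W) : IsPolyhedral (L '' S) := by
  obtain ⟨ι, _, f, c, rfl⟩ := hS
  let Φ : V →ₗ[ℝ] W × (ι → ℝ) := L.prod (LinearMap.pi f)
  have : L '' {x | ∀ i, f i x ≤ c i} =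
      Prod.fst '' ((LinearMap.range Φ : Set (W × (ι → ℝ))) ∩ {w | ∀ i, w.2 i ≤ c i}) := by
    ext w
    simp [Φ, and_comm]
  rw [this]
  exact ((LinearMap.range Φ).isPolyhedral.inter (isPolyhedral_setOf_forall_le
    (fun i => (LinearMap.proj i).comp (LinearMap.snd ℝ W _)) c)).image_fst_pi

theorem IsPolyhedral.isClosed [TopologicalSpace V] [IsTopologicalAddGroup V] [ContinuousSMul ℝ V]
    [T2Space V] [FiniteDimensional ℝ V] {S : Set V} (hS : IsPolyhedral S) : IsClosed S := by
  obtain ⟨ι, _, f, c, rfl⟩ := hS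
  simp only [Set.ofPred_forall]
  exact isClosed_iInter fun i => isClosed_le (f i).continuous_of_finiteDimensional continuous_const

variable {κ : Type*} [Fintype κ] [Nonempty κ]

def maxAffine (h : κ → V →ₗ[ℝ] ℝ) (d : κ → ℝ) (x : V) : ℝ :=
  Finset.univ.sup' Finset.univ_nonempty fun k => h k x + d k

theorem maxAffine_comp_add (h : κ → V →ₗ[ℝ] ℝ) (d : κ → ℝ) (L : W →ₗ[ℝ] V) (x₀ : V) (u : W) :
    maxAffine (fun k => (h k).comp L) (fun k => h k x₀ + d k) u = maxAffine h d (x₀ + L u) :=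
  Finset.sup'_congr _ rfl fun k _ => by simp only [LinearMap.comp_apply, map_add]; ring

theorem IsPolyhedral.exists_isMinOn_maxAffine {P : Set V} (hP : IsPolyhedral P) (hne : P.Nonempty)
    (h : κ → V →ₗ[ℝ] ℝ) (d : κ → ℝ) (hbdd : BddBelow (maxAffine h d '' P)) :
    ∃ x ∈ P, IsMinOn (maxAffine h d) P x := by
  let epi : Set (V × ℝ) :=
    Prod.fst ⁻¹' P ∩ {w | ∀ k, (h k ∘ₗ LinearMap.fst ℝ V ℝ - LinearMap.snd ℝ V ℝ) w ≤ -d k}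
  let T := {t | ∃ x ∈ P, maxAffine h d x ≤ t}
  have hT : T = LinearMap.snd ℝ V ℝ '' epi := by
    ext t
    simp [T, epi, maxAffine, Finset.sup'_le_iff, add_comm]
  have hclosed : IsClosed T := by
    rw [hT]
    exact (((hP.preimage (LinearMap.fst ℝ V ℝ)).inter
      (isPolyhedral_setOf_forall_le _ fun k => -d k)).image_linearMap _).isClosed
  obtain ⟨γ, hγ⟩ := hbdd
  have hTbdd : BddBelow T := ⟨γ, fun t ⟨x, hx, hxt⟩ => (hγ ⟨x, hx, rfl⟩).trans hxt⟩
  obtain ⟨x₀, hx₀⟩ := hne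
  obtain ⟨x, hx, hxT⟩ := hclosed.csInf_mem ⟨_, x₀, hx₀, le_rfl⟩ hTbdd
  exact ⟨x, hx, fun y hy => hxT.trans (csInf_le hTbdd ⟨y, hy, le_rfl⟩)⟩

variable {Y : Type*} [AddCommGroup Y] [Module ℝ Y]

theorem exists_isMinOn_maxAffine_preimage_inter (A : V →ₗ[ℝ] Y) (y : Y) {P : Set V}
    (hP : IsPolyhedral P) (hne : (A ⁻¹' {y} ∩ P).Nonempty) (h : κ → V →ₗ[ℝ] ℝ) (d : κ → ℝ)
    (hbdd : BddBelow (maxAffine h d '' (A ⁻¹' {y} ∩ P))) :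
    ∃ x ∈ A ⁻¹' {y} ∩ P, IsMinOn (maxAffine h d) (A ⁻¹' {y} ∩ P) x := by
  obtain ⟨x₀, hx₀y, hx₀P⟩ := hne
  let φ : LinearMap.ker A → V := fun u => x₀ + u
  have hφ : A ⁻¹' {y} ∩ P = φ '' (φ ⁻¹' P) := by
    ext x
    constructor
    · rintro ⟨hxy, hxP⟩
      refine ⟨⟨x - x₀, ?_⟩, by simpa [φ] using hxP, by simp [φ]⟩
      simp_all [LinearMap.mem_ker]
    · rintro ⟨u, hu, rfl⟩
      refine ⟨?_, hu⟩
      simp_all [φ, LinearMap.mem_ker.1 u.2]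
  have hobj : maxAffine h d ∘ φ =
      maxAffine (fun k => (h k).comp (LinearMap.ker A).subtype) (fun k => h k x₀ + d k) :=
    funext fun u => (maxAffine_comp_add h d (LinearMap.ker A).subtype x₀ u).symm
  rw [hφ] at hbdd ⊢
  rw [← Set.image_comp, hobj] at hbdd
  obtain ⟨u, hu, humin⟩ := ((hP.preimage_add_left x₀).preimage (LinearMap.ker A).subtype
    ).exists_isMinOn_maxAffine ⟨0, by simpa [φ] using hx₀P⟩ _ _ hbdd
  rw [← hobj] at humin
  exact ⟨φ u, ⟨u, hu, rfl⟩,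
    isMinOn_iff.2 (Set.forall_mem_image.2 fun u' hu' => isMinOn_iff.1 humin u' hu')⟩

end

theorem frank_wolfe_type_existence_general
    {X Y Z : Type*}
    [AddCommGroup X] [Module ℝ X] [TopologicalSpace X]
    [AddCommGroup Y] [Module ℝ Y] [TopologicalSpace Y]
    [AddCommGroup Z] [Module ℝ Z] [TopologicalSpace Z]
    (A : X →L[ℝ] Y) (y : Y) (p : ℕ) (xs : Fin p → X →L[ℝ] ℝ) (α : Fin p → ℝ)
    (B : X →L[ℝ] Z) (z : Z) (q : ℕ) (us : Fin q → X →L[ℝ] ℝ) (γs : Fin q → ℝ)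
    (m : ℕ) (v : Fin (m + 1) → X →L[ℝ] ℝ) (β : Fin (m + 1) → ℝ)
    (D : Set X) (hD : D = {x | A x = y ∧ ∀ i, xs i x ≤ α i})
    (domf : Set X) (hdomf : domf = {x | B x = z ∧ ∀ j, us j x ≤ γs j})
    (f : X → EReal)
    (hf : ∀ x ∈ domf,
      f x = ((Finset.univ.sup' Finset.univ_nonempty fun k => v k x + β k : ℝ) : EReal))
    (hf' : ∀ x ∉ domf, f x = ⊤)
    (hne : (D ∩ domf).Nonempty) :
    (∃ u ∈ D, f u ≠ ⊤ ∧ f u ≠ ⊥ ∧ ∀ x ∈ D, f u ≤ f x) ↔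
      ∃ γ : ℝ, ∀ x ∈ D, (γ : EReal) ≤ f x := by
  refine ⟨fun ⟨u, _, hu_top, hu_bot, hu_min⟩ => ⟨(f u).toReal, fun x hx => ?_⟩,
    fun ⟨γ, hγ⟩ => ?_⟩
  · exact (EReal.coe_toReal hu_top hu_bot).symm ▸ hu_min x hx
  let g := maxAffine (fun k => (v k : X →ₗ[ℝ] ℝ)) β
  have hfg : ∀ x ∈ domf, f x = g x := hf
  have hC : D ∩ domf = ((A : X →ₗ[ℝ] Y).prod (B : X →ₗ[ℝ] Z)) ⁻¹' {(y, z)} ∩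
      ({x | ∀ i, (xs i : X →ₗ[ℝ] ℝ) x ≤ α i} ∩ {x | ∀ j, (us j : X →ₗ[ℝ] ℝ) x ≤ γs j}) := by
    ext x
    simp only [hD, hdomf, Set.mem_inter_iff, Set.mem_ofPred_eq, Set.mem_preimage,
      Set.mem_singleton_iff, LinearMap.prod_apply, Function.prod_apply, Prod.mk.injEq,
      ContinuousLinearMap.coe_coe]
    tauto
  have hbdd : BddBelow (g '' (D ∩ domf)) :=
    ⟨γ, Set.forall_mem_image.2 fun x hx => by simpa [hfg x hx.2] using hγ x hx.1⟩
  rw [hC] at hne hbdd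
  obtain ⟨u, hu, humin⟩ := exists_isMinOn_maxAffine_preimage_inter _ _
    ((isPolyhedral_setOf_forall_le _ _).inter (isPolyhedral_setOf_forall_le _ _)) hne _ _ hbdd
  rw [← hC] at hu humin
  refine ⟨u, hu.1, by simp [hfg u hu.2], by simp [hfg u hu.2], fun x hx => ?_⟩
  by_cases hx' : x ∈ domf
  · simpa [hfg u hu.2, hfg x hx'] using isMinOn_iff.1 humin x ⟨hx, hx'⟩
  · simp [hf' x hx']

/-- **Frank–Wolfe-type existence theorem.**
`X, Y, Z` are real locally convex Hausdorff topological vector spaces.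
`D = {x | A x = y ∧ ⟨xsᵢ, x⟩ ≤ αᵢ}` is the generalized polyhedral convex constraint set,
`dom f = {x | B x = z ∧ ⟨usⱼ, x⟩ ≤ γsⱼ}` is nonempty, and
`f x = max {⟨vₖ, x⟩ + βₖ}` on `dom f`, `f = +∞` off `dom f`.
If `D ∩ dom f ≠ ∅`, then `(P) : min {f x | x ∈ D}` has a solution iff `f` is bounded
below by some real `γ` on `D`. -/
theorem frank_wolfe_type_existence
    {X Y Z : Type*}
    [AddCommGroup X] [Module ℝ X] [TopologicalSpace X] [IsTopologicalAddGroup X]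
    [ContinuousSMul ℝ X] [LocallyConvexSpace ℝ X] [T2Space X]
    [AddCommGroup Y] [Module ℝ Y] [TopologicalSpace Y] [IsTopologicalAddGroup Y]
    [ContinuousSMul ℝ Y] [LocallyConvexSpace ℝ Y] [T2Space Y]
    [AddCommGroup Z] [Module ℝ Z] [TopologicalSpace Z] [IsTopologicalAddGroup Z]
    [ContinuousSMul ℝ Z] [LocallyConvexSpace ℝ Z] [T2Space Z]
    (A : X →L[ℝ] Y) (y : Y) (p : ℕ) (xs : Fin p → X →L[ℝ] ℝ) (α : Fin p → ℝ)
    (B : X →L[ℝ] Z) (z : Z) (q : ℕ) (us : Fin q → X →L[ℝ] ℝ) (γs : Fin q → ℝ)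
    (m : ℕ) (v : Fin (m + 1) → X →L[ℝ] ℝ) (β : Fin (m + 1) → ℝ)
    (D : Set X) (hD : D = {x | A x = y ∧ ∀ i, xs i x ≤ α i})
    (domf : Set X) (hdomf : domf = {x | B x = z ∧ ∀ j, us j x ≤ γs j})
    (hdomne : domf.Nonempty)
    (f : X → EReal)
    (hf : ∀ x ∈ domf,
      f x = ((Finset.univ.sup' Finset.univ_nonempty fun k => v k x + β k : ℝ) : EReal))
    (hf' : ∀ x ∉ domf, f x = ⊤)
    (hne : (D ∩ domf).Nonempty) :
    (∃ u ∈ D, f u ≠ ⊤ ∧ f u ≠ ⊥ ∧ ∀ x ∈ D, f u ≤ f x) ↔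
      ∃ γ : ℝ, ∀ x ∈ D, (γ : EReal) ≤ f x :=
  frank_wolfe_type_existence_general A y p xs α B z q us γs m v β D hD domf hdomf f hf hf' hne
end

section
/- Let f be a proper generalized polyhedral convex function with f(x) = max{⟨v_k*, x⟩ + β_k : k = 1,…,m} on dom f and f = +∞ off dom f. Then the recession function of f satisfies: f0⁺(v) = max{⟨v_k*, v⟩ : k = 1,…,m} if v ∈ 0⁺(dom f), and f0⁺(v) = +∞ if v ∉ 0⁺(dom f). In particular, f0⁺ is a proper generalized polyhedral convex function. -/
/-- The recession cone `0⁺C = {v | ∀ x ∈ C, ∀ t ≥ 0, x + t v ∈ C}`. -/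
def recCone {X : Type*} [AddCommGroup X] [Module ℝ X] (C : Set X) : Set X :=
  {v | ∀ x ∈ C, ∀ t : ℝ, 0 ≤ t → x + t • v ∈ C}

/-- A generalized polyhedral convex set: the intersection of a closed affine subspace
with finitely many closed half-spaces. -/
def IsGPCS {X : Type*} [AddCommGroup X] [Module ℝ X] [TopologicalSpace X] (S : Set X) : Prop :=
  ∃ (p : ℕ) (xs : Fin p → X →L[ℝ] ℝ) (α : Fin p → ℝ) (L : AffineSubspace ℝ X),
    IsClosed (L : Set X) ∧ S = {x | x ∈ L ∧ ∀ i, xs i x ≤ α i}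

/-- A generalized polyhedral convex function: its epigraph is a generalized polyhedral
convex subset of `X × ℝ`. -/
def IsGPCFun {X : Type*} [AddCommGroup X] [Module ℝ X] [TopologicalSpace X]
    (g : X → EReal) : Prop :=
  IsGPCS {pt : X × ℝ | g pt.1 ≤ (pt.2 : EReal)}

/-! The epigraph of `f` is itself generalized polyhedral in `X × ℝ`: it is cut out by `B x = z`,
`uⱼ x ≤ γⱼ` and `vₖ x - α ≤ -βₖ`. The recession cone of a nonempty set `{x | B x = z, uᵢ x ≤ γᵢ}`
is obtained by replacing all right-hand sides by `0`, since a ray stays in a half-space exactly when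
its direction does not increase the functional. Hence `0⁺(epi f)` is the epigraph of
`w ↦ maxₖ vₖ w` restricted to `0⁺(dom f)`, which is both the formula for `f0⁺` and a generalized
polyhedral set. -/

lemma zero_mem_recCone {X : Type*} [AddCommGroup X] [Module ℝ X] (C : Set X) :
    (0 : X) ∈ recCone C :=
  fun x hx t _ => by simpa using hx

lemma nonpos_of_forall_nonneg_mul_le {c d : ℝ} (h : ∀ t : ℝ, 0 ≤ t → t * c ≤ d) : c ≤ 0 := by
  by_contra! hc
  have hd : 0 ≤ d := by simpa using h 0 le_rfl
  have := h ((d + 1) / c) (by positivity)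
  rw [div_mul_cancel₀ _ hc.ne'] at this
  linarith

lemma sInf_coe_image_eq_ite {X : Type*} {E : Set (X × ℝ)} {C : Set X} [DecidablePred (· ∈ C)]
    {g : X → ℝ} (hE : ∀ w μ, (w, μ) ∈ E ↔ w ∈ C ∧ g w ≤ μ) (w : X) :
    sInf ((fun μ : ℝ => (μ : EReal)) '' {μ | (w, μ) ∈ E}) = if w ∈ C then (g w : EReal) else ⊤ := by
  split_ifs with hw
  · refine IsLeast.csInf_eq ⟨⟨g w, (hE w _).2 ⟨hw, le_rfl⟩, rfl⟩, ?_⟩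
    rintro _ ⟨μ, hμ, rfl⟩
    exact EReal.coe_le_coe_iff.2 ((hE w μ).1 hμ).2
  · simp [hE, hw]

section Polyhedron

variable {X Z ι κ : Type*} [AddCommGroup X] [Module ℝ X] [TopologicalSpace X]
  [AddCommGroup Z] [Module ℝ Z] [TopologicalSpace Z]
  {B : X →L[ℝ] Z} {z : Z} {u : ι → X →L[ℝ] ℝ} {γ : ι → ℝ}

def polyhedron (B : X →L[ℝ] Z) (z : Z) (u : ι → X →L[ℝ] ℝ) (γ : ι → ℝ) : Set X :=
  {x | B x = z ∧ ∀ i, u i x ≤ γ i}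

lemma mem_polyhedron_zero_of_forall_add_smul_mem {x w : X}
    (h : ∀ t : ℝ, 0 ≤ t → x + t • w ∈ polyhedron B z u γ) : w ∈ polyhedron B 0 u 0 := by
  refine ⟨?_, fun i => nonpos_of_forall_nonneg_mul_le (d := γ i - u i x) fun t ht => ?_⟩
  · have h₀ := (h 0 le_rfl).1
    have h₁ := (h 1 zero_le_one).1
    simp only [zero_smul, add_zero, one_smul, map_add] at h₀ h₁
    exact add_eq_left.mp (h₁.trans h₀.symm)
  · have := (h t ht).2 i
    simp only [map_add, map_smul, smul_eq_mul] at this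
    linarith

lemma add_smul_mem_polyhedron {x w : X} (hx : x ∈ polyhedron B z u γ)
    (hw : w ∈ polyhedron B 0 u 0) {t : ℝ} (ht : 0 ≤ t) : x + t • w ∈ polyhedron B z u γ := by
  refine ⟨by simp [hx.1, hw.1], fun i => ?_⟩
  have := mul_nonpos_of_nonneg_of_nonpos ht (hw.2 i)
  have := hx.2 i
  simp only [map_add, map_smul, smul_eq_mul]
  linarith

theorem recCone_polyhedron (h : (polyhedron B z u γ).Nonempty) :
    recCone (polyhedron B z u γ) = polyhedron B 0 u 0 := by
  obtain ⟨x₀, hx₀⟩ := h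
  ext w
  exact ⟨fun hw => mem_polyhedron_zero_of_forall_add_smul_mem (hw x₀ hx₀),
    fun hw x hx t ht => add_smul_mem_polyhedron hx hw ht⟩

theorem isGPCS_polyhedron [T1Space Z] [Finite ι] (B : X →L[ℝ] Z) (z : Z) (u : ι → X →L[ℝ] ℝ)
    (γ : ι → ℝ) : IsGPCS (polyhedron B z u γ) := by
  let e := Finite.equivFin ι
  refine ⟨Nat.card ι, u ∘ e.symm, γ ∘ e.symm,
    (affineSpan ℝ {z}).comap B.toLinearMap.toAffineMap, ?_, ?_⟩
  · rw [AffineSubspace.coe_comap, AffineSubspace.coe_affineSpan_singleton]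
    exact isClosed_singleton.preimage B.continuous
  · ext x
    simp [polyhedron, e.symm.forall_congr_left]

def epiPolyhedron (B : X →L[ℝ] Z) (z : Z) (u : ι → X →L[ℝ] ℝ) (γ : ι → ℝ)
    (v : κ → X →L[ℝ] ℝ) (β : κ → ℝ) : Set (X × ℝ) :=
  polyhedron (B.comp (.fst ℝ X ℝ)) z
    (Sum.elim (fun i => (u i).comp (.fst ℝ X ℝ)) fun k => (v k).comp (.fst ℝ X ℝ) - .snd ℝ X ℝ)
    (Sum.elim γ (-β))

variable {v : κ → X →L[ℝ] ℝ} {β : κ → ℝ}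

lemma mem_epiPolyhedron {x : X} {α : ℝ} :
    (x, α) ∈ epiPolyhedron B z u γ v β ↔ x ∈ polyhedron B z u γ ∧ ∀ k, v k x + β k ≤ α := by
  simp only [epiPolyhedron, polyhedron, Set.mem_ofPred_eq, Sum.forall, Sum.elim_inl,
    Sum.elim_inr, ContinuousLinearMap.comp_apply, sub_apply,
    ContinuousLinearMap.coe_fst', ContinuousLinearMap.coe_snd', Pi.neg_apply, and_assoc]
  refine and_congr_right' (and_congr_right' (forall_congr' fun k => ?_))
  constructor <;> intro h <;> linarith

lemma recCone_epiPolyhedron (h : (epiPolyhedron B z u γ v β).Nonempty) :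
    recCone (epiPolyhedron B z u γ v β) = epiPolyhedron B 0 u 0 v 0 := by
  rw [epiPolyhedron, recCone_polyhedron h, epiPolyhedron, neg_zero, Sum.elim_zero_zero]

lemma epigraph_eq_epiPolyhedron [Fintype κ] [Nonempty κ] {f : X → EReal}
    (hf : ∀ x ∈ polyhedron B z u γ,
      f x = ((Finset.univ.sup' Finset.univ_nonempty fun k => v k x + β k : ℝ) : EReal))
    (hf' : ∀ x ∉ polyhedron B z u γ, f x = ⊤) :
    {p : X × ℝ | f p.1 ≤ p.2} = epiPolyhedron B z u γ v β := by
  ext ⟨x, α⟩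
  rw [mem_epiPolyhedron]
  by_cases hx : x ∈ polyhedron B z u γ
  · simp [hf x hx, hx]
  · simp [hf' x hx, hx]

end Polyhedron

theorem recession_function_of_gpcf_general
    {X Z : Type*}
    [AddCommGroup X] [Module ℝ X] [TopologicalSpace X]
    [AddCommGroup Z] [Module ℝ Z] [TopologicalSpace Z] [T2Space Z]
    (B : X →L[ℝ] Z) (z : Z) (q : ℕ) (us : Fin q → X →L[ℝ] ℝ) (γs : Fin q → ℝ)
    (m : ℕ) (v : Fin (m + 1) → X →L[ℝ] ℝ) (β : Fin (m + 1) → ℝ)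
    (domf : Set X) (hdomf : domf = {x | B x = z ∧ ∀ j, us j x ≤ γs j})
    (hdomne : domf.Nonempty)
    (f : X → EReal)
    (hf : ∀ x ∈ domf,
      f x = ((Finset.univ.sup' Finset.univ_nonempty fun k => v k x + β k : ℝ) : EReal))
    (hf' : ∀ x ∉ domf, f x = ⊤)
    (frec : X → EReal)
    (hfrec : ∀ w : X, frec w =
      sInf ((fun μ : ℝ => (μ : EReal)) ''
        {μ : ℝ | (w, μ) ∈ recCone {pt : X × ℝ | f pt.1 ≤ (pt.2 : EReal)}})) :
    (∀ w : X,
      (w ∈ recCone domf →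
        frec w = ((Finset.univ.sup' Finset.univ_nonempty fun k => v k w : ℝ) : EReal)) ∧
      (w ∉ recCone domf → frec w = ⊤)) ∧
    (∃ w : X, frec w ≠ ⊤) ∧ (∀ w : X, frec w ≠ ⊥) ∧ IsGPCFun frec := by
  classical
  change domf = polyhedron B z us γs at hdomf
  subst hdomf
  set M : X → ℝ := fun w => Finset.univ.sup' Finset.univ_nonempty fun k => v k w
  have hepi := epigraph_eq_epiPolyhedron hf hf'
  have hepi_ne : (epiPolyhedron B z us γs v β).Nonempty := by
    obtain ⟨x₀, hx₀⟩ := hdomne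
    exact ⟨_, hepi.subset (show (x₀, _) ∈ {p : X × ℝ | f p.1 ≤ p.2} from (hf x₀ hx₀).le)⟩
  have hrec : ∀ w μ, (w, μ) ∈ recCone {pt : X × ℝ | f pt.1 ≤ (pt.2 : EReal)} ↔
      w ∈ recCone (polyhedron B z us γs) ∧ M w ≤ μ := by
    intro w μ
    rw [hepi, recCone_epiPolyhedron hepi_ne, mem_epiPolyhedron, recCone_polyhedron hdomne,
      Finset.sup'_le_iff]
    simp
  have hfrec_eq (w : X) :
      frec w = if w ∈ recCone (polyhedron B z us γs) then (M w : EReal) else ⊤ :=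
    (hfrec w).trans (sInf_coe_image_eq_ite hrec w)
  refine ⟨fun w => ⟨fun hw => by rw [hfrec_eq, if_pos hw], fun hw => by rw [hfrec_eq, if_neg hw]⟩,
    ⟨0, by simp [hfrec_eq, zero_mem_recCone]⟩, fun w => by rw [hfrec_eq]; split_ifs <;> simp, ?_⟩
  have hepi_rec : {pt : X × ℝ | frec pt.1 ≤ pt.2} = recCone {pt : X × ℝ | f pt.1 ≤ pt.2} := by
    ext ⟨w, μ⟩
    rw [Set.mem_ofPred_eq, hrec, hfrec_eq]
    split_ifs with hw <;> simp [hw]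
  rw [IsGPCFun, hepi_rec, hepi, recCone_epiPolyhedron hepi_ne]
  exact isGPCS_polyhedron _ _ _ _

/-- Formula for the recession function of a proper generalized polyhedral convex function:
`f0⁺(w) = max {⟨vₖ, w⟩ : k}` if `w ∈ 0⁺(dom f)` and `f0⁺(w) = +∞` otherwise; in particular
`f0⁺` is a proper generalized polyhedral convex function.  Here
`f0⁺(w) = inf {μ ∈ ℝ | (w, μ) ∈ 0⁺(epi f)}`. -/
theorem recession_function_of_gpcf
    {X Z : Type*}
    [AddCommGroup X] [Module ℝ X] [TopologicalSpace X] [IsTopologicalAddGroup X]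
    [ContinuousSMul ℝ X] [LocallyConvexSpace ℝ X] [T2Space X]
    [AddCommGroup Z] [Module ℝ Z] [TopologicalSpace Z] [IsTopologicalAddGroup Z]
    [ContinuousSMul ℝ Z] [LocallyConvexSpace ℝ Z] [T2Space Z]
    (B : X →L[ℝ] Z) (z : Z) (q : ℕ) (us : Fin q → X →L[ℝ] ℝ) (γs : Fin q → ℝ)
    (m : ℕ) (v : Fin (m + 1) → X →L[ℝ] ℝ) (β : Fin (m + 1) → ℝ)
    (domf : Set X) (hdomf : domf = {x | B x = z ∧ ∀ j, us j x ≤ γs j})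
    (hdomne : domf.Nonempty)
    (f : X → EReal)
    (hf : ∀ x ∈ domf,
      f x = ((Finset.univ.sup' Finset.univ_nonempty fun k => v k x + β k : ℝ) : EReal))
    (hf' : ∀ x ∉ domf, f x = ⊤)
    (frec : X → EReal)
    (hfrec : ∀ w : X, frec w =
      sInf ((fun μ : ℝ => (μ : EReal)) ''
        {μ : ℝ | (w, μ) ∈ recCone {pt : X × ℝ | f pt.1 ≤ (pt.2 : EReal)}})) :
    (∀ w : X,
      (w ∈ recCone domf →
        frec w = ((Finset.univ.sup' Finset.univ_nonempty fun k => v k w : ℝ) : EReal)) ∧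
      (w ∉ recCone domf → frec w = ⊤)) ∧
    (∃ w : X, frec w ≠ ⊤) ∧ (∀ w : X, frec w ≠ ⊥) ∧ IsGPCFun frec :=
  recession_function_of_gpcf_general B z q us γs m v β domf hdomf hdomne f hf hf' frec hfrec
end

section
/- The solution set Sol(P) of problem (P) is a generalized polyhedral convex set. Moreover, if both D and dom f are polyhedral convex sets, then Sol(P) is a polyhedral convex set. -/
/-- A polyhedral convex set: a finite intersection of closed half-spaces (possibly all of `X`). -/
def IsPCS {X : Type*} [AddCommGroup X] [Module ℝ X] [TopologicalSpace X] (S : Set X) : Prop :=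
  ∃ (p : ℕ) (xs : Fin p → X →L[ℝ] ℝ) (α : Fin p → ℝ),
    S = {x | ∀ i, xs i x ≤ α i}

section Polyhedral

variable {X : Type*} [AddCommGroup X] [Module ℝ X] [TopologicalSpace X]

theorem IsPCS.inter {S T : Set X} (hS : IsPCS S) (hT : IsPCS T) : IsPCS (S ∩ T) := by
  obtain ⟨p, xs, α, rfl⟩ := hS
  obtain ⟨q, ys, γ, rfl⟩ := hT
  refine ⟨p + q, Fin.append xs ys, Fin.append α γ, ?_⟩
  ext x
  simp only [Set.mem_inter_iff, Set.mem_ofPred_eq, Fin.forall_fin_add, Fin.append_left,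
    Fin.append_right]

theorem IsGPCS.inter {S T : Set X} (hS : IsGPCS S) (hT : IsGPCS T) : IsGPCS (S ∩ T) := by
  obtain ⟨p, xs, α, L, hL, rfl⟩ := hS
  obtain ⟨q, ys, γ, M, hM, rfl⟩ := hT
  refine ⟨p + q, Fin.append xs ys, Fin.append α γ, L ⊓ M, hL.inter hM, ?_⟩
  ext x
  simp only [Set.mem_inter_iff, Set.mem_ofPred_eq, AffineSubspace.mem_inf_iff,
    Fin.forall_fin_add, Fin.append_left, Fin.append_right]
  tauto

theorem IsPCS.isGPCS {S : Set X} (hS : IsPCS S) : IsGPCS S := by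
  obtain ⟨p, xs, α, rfl⟩ := hS
  exact ⟨p, xs, α, ⊤, by simp, by simp⟩

theorem isPCS_empty : IsPCS (∅ : Set X) :=
  ⟨1, fun _ => 0, fun _ => -1, by ext; simp⟩

theorem isPCS_setOf_forall_add_le {n : ℕ} (v : Fin n → X →L[ℝ] ℝ) (β : Fin n → ℝ) (c : ℝ) :
    IsPCS {x : X | ∀ k, v k x + β k ≤ c} :=
  ⟨n, v, fun k => c - β k, by simp only [le_sub_iff_add_le]⟩

end Polyhedral

theorem setOf_le_coe_eq_inter_of_eq_sup' {α ι : Type*} [Fintype ι] [Nonempty ι]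
    {dom : Set α} {φ : ι → α → ℝ} {f : α → EReal}
    (hf : ∀ x ∈ dom, f x = ((Finset.univ.sup' Finset.univ_nonempty fun k => φ k x : ℝ) : EReal))
    (hf' : ∀ x ∉ dom, f x = ⊤) (c : ℝ) :
    {x | f x ≤ c} = dom ∩ {x | ∀ k, φ k x ≤ c} := by
  ext x
  by_cases hx : x ∈ dom
  · simp [hx, hf x hx, Finset.sup'_le_iff]
  · simp [hx, hf' x hx]

theorem finite_minimizers_eq_inter_sublevel {α : Type*} {D : Set α} {f : α → EReal} {u₀ : α}
    {c : ℝ} (hu₀ : u₀ ∈ D) (hmin : ∀ x ∈ D, f u₀ ≤ f x) (hc : f u₀ = c) :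
    {u | u ∈ D ∧ f u ≠ ⊤ ∧ f u ≠ ⊥ ∧ ∀ x ∈ D, f u ≤ f x} = D ∩ {x | f x ≤ c} := by
  ext x
  constructor
  · rintro ⟨hx, -, -, hxmin⟩
    exact ⟨hx, hc ▸ hxmin u₀ hu₀⟩
  · rintro ⟨hx, hle⟩
    have hfx : f x = f u₀ := le_antisymm (hc ▸ hle) (hmin x hx)
    rw [Set.mem_ofPred_eq, hfx, hc]
    exact ⟨hx, EReal.coe_ne_top c, EReal.coe_ne_bot c, fun y hy => hc ▸ hmin y hy⟩

theorem solution_set_gpcs_general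
    {X : Type*}
    [AddCommGroup X] [Module ℝ X] [TopologicalSpace X]
    (D : Set X) (hD : IsGPCS D)
    (domf : Set X) (hdomf : IsGPCS domf)
    (m : ℕ) (v : Fin (m + 1) → X →L[ℝ] ℝ) (β : Fin (m + 1) → ℝ)
    (f : X → EReal)
    (hf : ∀ x ∈ domf,
      f x = ((Finset.univ.sup' Finset.univ_nonempty fun k => v k x + β k : ℝ) : EReal))
    (hf' : ∀ x ∉ domf, f x = ⊤) :
    IsGPCS {u | u ∈ D ∧ f u ≠ ⊤ ∧ f u ≠ ⊥ ∧ ∀ x ∈ D, f u ≤ f x} ∧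
      (IsPCS D → IsPCS domf →
        IsPCS {u | u ∈ D ∧ f u ≠ ⊤ ∧ f u ≠ ⊥ ∧ ∀ x ∈ D, f u ≤ f x}) := by
  rcases Set.eq_empty_or_nonempty {u | u ∈ D ∧ f u ≠ ⊤ ∧ f u ≠ ⊥ ∧ ∀ x ∈ D, f u ≤ f x} with
    hempty | ⟨u₀, hu₀D, hu₀top, -, hu₀min⟩
  · rw [hempty]
    exact ⟨isPCS_empty.isGPCS, fun _ _ => isPCS_empty⟩
  have hu₀dom : u₀ ∈ domf := by_contra fun h => hu₀top (hf' u₀ h)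
  set c := Finset.univ.sup' Finset.univ_nonempty fun k => v k u₀ + β k
  have hM := isPCS_setOf_forall_add_le v β c
  rw [finite_minimizers_eq_inter_sublevel hu₀D hu₀min (hf u₀ hu₀dom),
    setOf_le_coe_eq_inter_of_eq_sup' (φ := fun k x => v k x + β k) hf hf' c]
  exact ⟨hD.inter (hdomf.inter hM.isGPCS), fun hD' hdomf' => hD'.inter (hdomf'.inter hM)⟩

/-- The solution set `Sol(P)` of the generalized polyhedral convex optimization problem
`(P) : min {f x | x ∈ D}` is a generalized polyhedral convex set; moreover, if `D` and
`dom f` are polyhedral convex sets, then `Sol(P)` is polyhedral convex. -/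
theorem solution_set_gpcs
    {X : Type*}
    [AddCommGroup X] [Module ℝ X] [TopologicalSpace X] [IsTopologicalAddGroup X]
    [ContinuousSMul ℝ X] [LocallyConvexSpace ℝ X] [T2Space X]
    (D : Set X) (hD : IsGPCS D) (hDne : D.Nonempty)
    (domf : Set X) (hdomf : IsGPCS domf) (hdomne : domf.Nonempty)
    (m : ℕ) (v : Fin (m + 1) → X →L[ℝ] ℝ) (β : Fin (m + 1) → ℝ)
    (f : X → EReal)
    (hf : ∀ x ∈ domf,
      f x = ((Finset.univ.sup' Finset.univ_nonempty fun k => v k x + β k : ℝ) : EReal))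
    (hf' : ∀ x ∉ domf, f x = ⊤) :
    IsGPCS {u | u ∈ D ∧ f u ≠ ⊤ ∧ f u ≠ ⊥ ∧ ∀ x ∈ D, f u ≤ f x} ∧
      (IsPCS D → IsPCS domf →
        IsPCS {u | u ∈ D ∧ f u ≠ ⊤ ∧ f u ≠ ⊥ ∧ ∀ x ∈ D, f u ≤ f x}) :=
  solution_set_gpcs_general D hD domf hdomf m v β f hf hf'
end

section
/- (Optimality condition I) A vector x ∈ D ∩ dom f is a solution of problem (P) if and only if 0 belongs to the weak*-closure of ∂f(x) + N_D(x) in X*. -/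
/-!
Sufficiency: for `u ∈ D`, every `φ ∈ ∂f(x) + N_D(x)` satisfies `φ u - φ x ≤ f u - f x`, a
weak*-closed condition on `φ`, so it passes to `0`.

Necessity: if `0` is not in the weak*-closure of the convex set `∂f(x) + N_D(x)`, Hahn–Banach in
the locally convex space `X*` separates it by a weak*-continuous functional, i.e. by evaluation
at some `w ∈ X`, and `φ w` is bounded above by a negative constant on `∂f(x) + N_D(x)`. Since
`vₖ + N_{dom f}(x) ⊆ ∂f(x)` for every piece `k` active at `x` and normal cones are cones, this gives
`vₖ w < 0` for the active pieces and `ψ w ≤ 0` on `N_D(x)` and `N_{dom f}(x)`. For generalized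
polyhedral sets the latter makes `w` a feasible direction, and moving from `x` along `w` strictly
decreases `f`, contradicting minimality.
-/

open scoped Pointwise

open Filter Topology Set

lemma eventually_add_mul_lt {a b c : ℝ} (hac : a ≤ c) (hb : a = c → b < 0) :
    ∀ᶠ τ in 𝓝[>] 0, a + τ * b < c := by
  rcases hac.lt_or_eq with hlt | rfl
  · have hcont : Tendsto (fun τ : ℝ => a + τ * b) (𝓝 0) (𝓝 a) :=
      (continuous_const.add (continuous_id.mul continuous_const)).tendsto' 0 a (by simp)
    exact nhdsWithin_le_nhds (hcont.eventually (gt_mem_nhds hlt))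
  · filter_upwards [self_mem_nhdsWithin] with τ hτ
    linarith [mul_neg_of_pos_of_neg hτ (hb rfl)]

lemma eventually_add_mul_le {a b c : ℝ} (hac : a ≤ c) (hb : a = c → b ≤ 0) :
    ∀ᶠ τ in 𝓝[>] 0, a + τ * b ≤ c := by
  rcases hac.lt_or_eq with hlt | rfl
  · exact (eventually_add_mul_lt hac fun h => absurd h hlt.ne).mono fun _ => le_of_lt
  · filter_upwards [self_mem_nhdsWithin] with τ hτ
    linarith [mul_nonpos_of_nonneg_of_nonpos hτ.le (hb rfl)]

lemma nonpos_of_forall_add_mul_lt {a b c : ℝ} (h : ∀ t : ℝ, 0 ≤ t → a + t * b < c) : b ≤ 0 := by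
  by_contra! hb
  have := h (|c - a| / b) (by positivity)
  rw [div_mul_cancel₀ _ hb.ne'] at this
  linarith [le_abs_self (c - a)]

lemma eventually_sup'_add_smul_lt {X ι : Type*} [AddCommGroup X] [Module ℝ X]
    [TopologicalSpace X] [Fintype ι] [Nonempty ι] (v : ι → X →L[ℝ] ℝ) (β : ι → ℝ) {x w : X}
    (hw : ∀ k, v k x + β k = Finset.univ.sup' Finset.univ_nonempty (fun j => v j x + β j) →
      v k w < 0) :
    ∀ᶠ τ : ℝ in 𝓝[>] 0, Finset.univ.sup' Finset.univ_nonempty (fun k => v k (x + τ • w) + β k) <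
      Finset.univ.sup' Finset.univ_nonempty (fun k => v k x + β k) := by
  simp only [Finset.sup'_lt_iff, Finset.mem_univ, true_implies, eventually_all]
  intro k
  have hle := Finset.le_sup' (fun j => v j x + β j) (Finset.mem_univ k)
  filter_upwards [eventually_add_mul_lt hle (hw k)] with τ hτ
  simpa only [map_add, map_smul, smul_eq_mul, add_right_comm] using hτ

namespace WeakDual

variable {𝕜 E : Type*} [CommSemiring 𝕜] [TopologicalSpace 𝕜] [ContinuousAdd 𝕜]
  [ContinuousConstSMul 𝕜 𝕜] [AddCommMonoid E] [Module 𝕜 E] [TopologicalSpace E]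

@[simp] lemma zero_apply (y : E) : (0 : WeakDual 𝕜 E) y = 0 := rfl

@[simp] lemma add_apply (φ ψ : WeakDual 𝕜 E) (y : E) : (φ + ψ) y = φ y + ψ y := rfl

@[simp] lemma smul_apply (t : 𝕜) (φ : WeakDual 𝕜 E) (y : E) : (t • φ) y = t * φ y := rfl

end WeakDual

section Dual

variable {X : Type*} [AddCommGroup X] [Module ℝ X] [TopologicalSpace X]

def subdifferential (f : X → EReal) (x : X) : Set (WeakDual ℝ X) :=
  {φ | ∀ u, ((φ u - φ x : ℝ) : EReal) ≤ f u - f x}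

def normalCone (S : Set X) (x : X) : Set (WeakDual ℝ X) :=
  {φ | ∀ u ∈ S, φ u - φ x ≤ 0}

lemma convex_subdifferential (f : X → EReal) (x : X) : Convex ℝ (subdifferential f x) := by
  have hIic : ∀ e : EReal, Convex ℝ {r : ℝ | (r : EReal) ≤ e} := fun e =>
    (IsLowerSet.ordConnected fun r s hsr hs => (EReal.coe_le_coe_iff.2 hsr).trans hs).convex
  rw [subdifferential, Set.ofPred_forall]
  exact convex_iInter fun u =>
    (hIic _).linear_preimage ((topDualPairing ℝ X).flip u - (topDualPairing ℝ X).flip x)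

lemma convex_normalCone (S : Set X) (x : X) : Convex ℝ (normalCone S x) := by
  simp_rw [normalCone, Set.ofPred_forall]
  exact convex_iInter fun u => convex_iInter fun _ =>
    (convex_Iic 0).linear_preimage ((topDualPairing ℝ X).flip u - (topDualPairing ℝ X).flip x)

lemma zero_mem_normalCone (S : Set X) (x : X) : (0 : WeakDual ℝ X) ∈ normalCone S x :=
  fun _ _ => (sub_self _).le

lemma smul_mem_normalCone {S : Set X} {x : X} {φ : WeakDual ℝ X} {t : ℝ} (ht : 0 ≤ t)
    (hφ : φ ∈ normalCone S x) : t • φ ∈ normalCone S x := fun u hu => by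
  simpa only [WeakDual.smul_apply, ← mul_sub] using mul_nonpos_of_nonneg_of_nonpos ht (hφ u hu)

instance : LocallyConvexSpace ℝ (WeakDual ℝ X) := WeakBilin.locallyConvexSpace

lemma exists_apply_lt_of_zero_notMem_closure {C : Set (WeakDual ℝ X)} (hC : Convex ℝ C)
    (h0 : (0 : WeakDual ℝ X) ∉ closure C) : ∃ w : X, ∃ c < 0, ∀ φ ∈ C, φ w < c := by
  obtain ⟨ℓ, c, hℓC, hc⟩ := geometric_hahn_banach_closed_point hC.closure isClosed_closure h0
  -- every weak*-continuous functional on `X*` is evaluation at a point of `X`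
  obtain ⟨w, rfl⟩ := LinearMap.dualEmbedding_surjective (topDualPairing ℝ X) ℓ
  exact ⟨w, c, hc, fun φ hφ => hℓC φ (subset_closure hφ)⟩

lemma le_of_zero_mem_closure_subdifferential_add_normalCone {f : X → EReal} {S : Set X}
    {x : X} (hx_top : f x ≠ ⊤) (hx_bot : f x ≠ ⊥)
    (h0 : (0 : WeakDual ℝ X) ∈ closure (subdifferential f x + normalCone S x)) :
    ∀ u ∈ S, f x ≤ f u := by
  intro u hu
  have hclosed : IsClosed {φ : WeakDual ℝ X | ((φ u - φ x : ℝ) : EReal) ≤ f u - f x} :=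
    isClosed_le (continuous_coe_real_ereal.comp
      ((WeakDual.eval_continuous u).sub (WeakDual.eval_continuous x))) continuous_const
  have hsub : subdifferential f x + normalCone S x ⊆
      {φ : WeakDual ℝ X | ((φ u - φ x : ℝ) : EReal) ≤ f u - f x} := by
    rintro _ ⟨φ, hφ, ψ, hψ, rfl⟩
    refine le_trans (EReal.coe_le_coe_iff.2 ?_) (hφ u)
    simp only [WeakDual.add_apply]
    linarith [hψ u hu]
  have := closure_minimal hsub hclosed h0
  change ((0 - 0 : ℝ) : EReal) ≤ f u - f x at this
  rwa [sub_self, EReal.coe_zero, EReal.sub_nonneg (.inr hx_top) (.inr hx_bot)] at this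

lemma toWeakDual_add_mem_subdifferential {ι : Type*} [Fintype ι] [Nonempty ι] {domf : Set X}
    {v : ι → X →L[ℝ] ℝ} {β : ι → ℝ} {f : X → EReal}
    (hf : ∀ x ∈ domf,
      f x = ((Finset.univ.sup' Finset.univ_nonempty fun k => v k x + β k : ℝ) : EReal))
    (hf' : ∀ x ∉ domf, f x = ⊤) {x : X} (hx : x ∈ domf) {k : ι}
    (hk : v k x + β k = Finset.univ.sup' Finset.univ_nonempty fun j => v j x + β j)
    {ψ : WeakDual ℝ X} (hψ : ψ ∈ normalCone domf x) :
    StrongDual.toWeakDual (v k) + ψ ∈ subdifferential f x := by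
  intro u
  by_cases hu : u ∈ domf
  · rw [hf u hu, hf x hx, ← EReal.coe_sub, EReal.coe_le_coe_iff]
    simp only [WeakDual.add_apply, StrongDual.toWeakDual_apply]
    linarith [Finset.le_sup' (fun j => v j u + β j) (Finset.mem_univ k), hψ u hu]
  · rw [hf' u hu, hf x hx, EReal.top_sub_coe]
    exact le_top

lemma descent_direction_of_separation {ι : Type*} [Fintype ι] [Nonempty ι] {D domf : Set X}
    {v : ι → X →L[ℝ] ℝ} {β : ι → ℝ} {f : X → EReal}
    (hf : ∀ x ∈ domf,
      f x = ((Finset.univ.sup' Finset.univ_nonempty fun k => v k x + β k : ℝ) : EReal))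
    (hf' : ∀ x ∉ domf, f x = ⊤) {x : X} (hx : x ∈ domf) {w : X} {c : ℝ} (hc : c < 0)
    (hsep : ∀ φ ∈ subdifferential f x + normalCone D x, φ w < c) :
    (∀ k, v k x + β k = Finset.univ.sup' Finset.univ_nonempty (fun j => v j x + β j) →
      v k w < 0) ∧
    (∀ φ ∈ normalCone D x, φ w ≤ 0) ∧ (∀ ψ ∈ normalCone domf x, ψ w ≤ 0) := by
  have hpiece : ∀ k, v k x + β k = Finset.univ.sup' Finset.univ_nonempty (fun j => v j x + β j) →
      ∀ ψ ∈ normalCone domf x, ∀ φ ∈ normalCone D x, v k w + ψ w + φ w < c :=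
    fun k hk ψ hψ φ hφ => hsep _ (Set.add_mem_add
      (toWeakDual_add_mem_subdifferential hf hf' hx hk hψ) hφ)
  obtain ⟨k₀, -, hk₀⟩ := Finset.exists_mem_eq_sup' Finset.univ_nonempty (fun k => v k x + β k)
  refine ⟨fun k hk => ?_, fun φ hφ => ?_, fun ψ hψ => ?_⟩
  · have := hpiece k hk 0 (zero_mem_normalCone _ _) 0 (zero_mem_normalCone _ _)
    simp only [WeakDual.zero_apply, add_zero] at this
    linarith
  · exact nonpos_of_forall_add_mul_lt fun t ht => by
      simpa only [WeakDual.zero_apply, WeakDual.smul_apply, add_zero] using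
        hpiece k₀ hk₀.symm 0 (zero_mem_normalCone _ _) _ (smul_mem_normalCone ht hφ)
  · exact nonpos_of_forall_add_mul_lt fun t ht => by
      simpa only [WeakDual.zero_apply, WeakDual.smul_apply, add_zero] using
        hpiece k₀ hk₀.symm _ (smul_mem_normalCone ht hψ) 0 (zero_mem_normalCone _ _)

end Dual

section Polyhedral

variable {X : Type*} [AddCommGroup X] [Module ℝ X] [TopologicalSpace X]
  [IsTopologicalAddGroup X]

lemma AffineSubspace.isClosed_direction_of_mem {L : AffineSubspace ℝ X}
    (hL : IsClosed (L : Set X)) {x : X} (hx : x ∈ L) : IsClosed (L.direction : Set X) := by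
  rw [AffineSubspace.coe_direction_eq_vsub_set_right hx]
  exact (Homeomorph.subRight x).isClosedMap _ hL

variable [ContinuousSMul ℝ X] [LocallyConvexSpace ℝ X]

lemma Submodule.exists_dual_vanishing_ne_zero_of_notMem {P : Submodule ℝ X}
    (hP : IsClosed (P : Set X)) {w : X} (hw : w ∉ P) :
    ∃ g : X →L[ℝ] ℝ, (∀ p ∈ P, g p = 0) ∧ g w ≠ 0 := by
  obtain ⟨g, c, hgP, hc⟩ := geometric_hahn_banach_closed_point P.convex hP hw
  -- a functional bounded above on a subspace vanishes there
  have hg : ∀ p ∈ P, g p = 0 := by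
    intro p hp
    by_contra hgp
    have := hgP _ (P.smul_mem ((c + 1) / g p) hp)
    rw [map_smul, smul_eq_mul, div_mul_cancel₀ _ hgp] at this
    linarith
  refine ⟨g, hg, fun hgw => ?_⟩
  linarith [hgP 0 P.zero_mem, map_zero g]

lemma IsGPCS.eventually_add_smul_mem {S : Set X} (hS : IsGPCS S) {x w : X} (hx : x ∈ S)
    (hw : ∀ ψ ∈ normalCone S x, ψ w ≤ 0) : ∀ᶠ τ : ℝ in 𝓝[>] 0, x + τ • w ∈ S := by
  obtain ⟨p, xs, α, L, hL, rfl⟩ := hS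
  obtain ⟨hxL, hxα⟩ := hx
  have hwL : w ∈ L.direction := by
    by_contra hwL
    obtain ⟨g, hg, hgw⟩ := Submodule.exists_dual_vanishing_ne_zero_of_notMem
      (AffineSubspace.isClosed_direction_of_mem hL hxL) hwL
    have hvanish : ∀ u ∈ L, g u - g x = 0 := fun u hu => by
      rw [← map_sub]
      exact hg _ (AffineSubspace.vsub_mem_direction hu hxL)
    have h1 : g w ≤ 0 := hw (StrongDual.toWeakDual g) fun u hu => (hvanish u hu.1).le
    have h2 : -g w ≤ 0 := hw (StrongDual.toWeakDual (-g)) fun u hu => by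
      change -g u - -g x ≤ 0
      linarith [hvanish u hu.1]
    exact hgw (by linarith)
  have hineq : ∀ i, ∀ᶠ τ : ℝ in 𝓝[>] 0, xs i x + τ * xs i w ≤ α i := fun i =>
    eventually_add_mul_le (hxα i) fun hi => hw (StrongDual.toWeakDual (xs i))
      fun u hu => by
        change xs i u - xs i x ≤ 0
        linarith [hu.2 i]
  filter_upwards [eventually_all.2 hineq] with τ hτ
  refine ⟨?_, fun i => ?_⟩
  · simpa [vadd_eq_add, add_comm] using
      AffineSubspace.vadd_mem_of_mem_direction (L.direction.smul_mem τ hwL) hxL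
  · simpa only [map_add, map_smul, smul_eq_mul] using hτ i

end Polyhedral

theorem optimality_condition_I_general
    {X : Type*}
    [AddCommGroup X] [Module ℝ X] [TopologicalSpace X] [IsTopologicalAddGroup X]
    [ContinuousSMul ℝ X] [LocallyConvexSpace ℝ X]
    (D : Set X) (hD : IsGPCS D)
    (domf : Set X) (hdomf : IsGPCS domf)
    (m : ℕ) (v : Fin (m + 1) → X →L[ℝ] ℝ) (β : Fin (m + 1) → ℝ)
    (f : X → EReal)
    (hf : ∀ x ∈ domf,
      f x = ((Finset.univ.sup' Finset.univ_nonempty fun k => v k x + β k : ℝ) : EReal))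
    (hf' : ∀ x ∉ domf, f x = ⊤)
    (x : X) (hxD : x ∈ D) (hxdom : x ∈ domf) :
    (∀ u ∈ D, f x ≤ f u) ↔
      (0 : WeakDual ℝ X) ∈ closure
        ({φ : WeakDual ℝ X | ∀ u : X, ((φ u - φ x : ℝ) : EReal) ≤ f u - f x} +
          {φ : WeakDual ℝ X | ∀ u ∈ D, φ u - φ x ≤ 0}) := by
  refine ⟨fun hmin => ?_, le_of_zero_mem_closure_subdifferential_add_normalCone
    (by simp [hf x hxdom]) (by simp [hf x hxdom])⟩
  by_contra h0
  obtain ⟨w, c, hc, hsep⟩ := exists_apply_lt_of_zero_notMem_closure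
    ((convex_subdifferential f x).add (convex_normalCone D x)) h0
  obtain ⟨hdescent, hfeasD, hfeasdom⟩ :=
    descent_direction_of_separation hf hf' hxdom hc hsep
  obtain ⟨τ, ⟨hτD, hτdom⟩, hτf⟩ := (((hD.eventually_add_smul_mem hxD hfeasD).and
    (hdomf.eventually_add_smul_mem hxdom hfeasdom)).and
    (eventually_sup'_add_smul_lt v β hdescent)).exists
  have := hmin _ hτD
  rw [hf _ hτdom, hf x hxdom, EReal.coe_le_coe_iff] at this
  exact this.not_gt hτf

/-- **Optimality condition I.**  With `D` a nonempty generalized polyhedral convex set and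
`f` a proper generalized polyhedral convex function (`f = max {⟨vₖ, ·⟩ + βₖ}` on its
nonempty generalized polyhedral convex domain, `+∞` elsewhere), a point
`x ∈ D ∩ dom f` solves `(P) : min {f x | x ∈ D}` iff `0` belongs to the weak*-closure of
`∂f(x) + N_D(x)` in `X*`. -/
theorem optimality_condition_I
    {X : Type*}
    [AddCommGroup X] [Module ℝ X] [TopologicalSpace X] [IsTopologicalAddGroup X]
    [ContinuousSMul ℝ X] [LocallyConvexSpace ℝ X] [T2Space X]
    (D : Set X) (hD : IsGPCS D) (hDne : D.Nonempty)
    (domf : Set X) (hdomf : IsGPCS domf) (hdomne : domf.Nonempty)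
    (m : ℕ) (v : Fin (m + 1) → X →L[ℝ] ℝ) (β : Fin (m + 1) → ℝ)
    (f : X → EReal)
    (hf : ∀ x ∈ domf,
      f x = ((Finset.univ.sup' Finset.univ_nonempty fun k => v k x + β k : ℝ) : EReal))
    (hf' : ∀ x ∉ domf, f x = ⊤)
    (x : X) (hxD : x ∈ D) (hxdom : x ∈ domf) :
    (∀ u ∈ D, f x ≤ f u) ↔
      (0 : WeakDual ℝ X) ∈ closure
        ({φ : WeakDual ℝ X | ∀ u : X, ((φ u - φ x : ℝ) : EReal) ≤ f u - f x} +
          {φ : WeakDual ℝ X | ∀ u ∈ D, φ u - φ x ≤ 0}) :=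
  optimality_condition_I_general D hD domf hdomf m v β f hf hf' x hxD hxdom
end

section
/- Let L₁, L₂ be closed affine subspaces of X and P₁, P₂ polyhedral convex sets in X such that D₁ := L₁ ∩ P₁ and D₂ := L₂ ∩ P₂ are nonempty. If the set D₁ − D₂ = {d₁ − d₂ : d₁ ∈ D₁, d₂ ∈ D₂} is a generalized polyhedral convex set in X, then L₁ − L₂ is a generalized polyhedral convex set in X. -/
/-!
Write `Dᵢ = Lᵢ ∩ Pᵢ`, pick `dᵢ ∈ Dᵢ` and put `V = dir L₁ + dir L₂`, so that
`L₁ - L₂ = (d₁ - d₂) + V`; it suffices to show that `V` is closed.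

In a nonempty generalized polyhedral set `S = M ∩ {gᵢ ≤ bᵢ}` some point satisfies every
constraint that is not an equality on all of `S` strictly; moving from it towards any point
of `M` satisfying the remaining equalities stays in `S` for a while. Hence the affine span of `S`
is `M` cut by those equalities, a closed set, and its direction `W = vectorSpan (D₁ - D₂)` is
closed. Now `W = vectorSpan D₁ + vectorSpan D₂ ⊆ V`, and `vectorSpan Dᵢ` contains
`dir Lᵢ ∩ ker φᵢ`, where `φᵢ : X → ℝ^pᵢ` collects the functionals defining `Pᵢ`. That subspace
has finite codimension in `dir Lᵢ`, so `V = W + F` with `F` finite-dimensional, and `V` is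
closed.
-/

open scoped Pointwise

open Filter Topology

theorem Submodule.exists_finiteDimensional_le_inf_ker_sup {K E Y : Type*} [Field K]
    [AddCommGroup E] [Module K E] [AddCommGroup Y] [Module K Y] [FiniteDimensional K Y]
    (φ : E →ₗ[K] Y) (V : Submodule K E) :
    ∃ F : Submodule K E, FiniteDimensional K F ∧ V ≤ V ⊓ LinearMap.ker φ ⊔ F := by
  set ψ := φ.domRestrict V
  obtain ⟨σ, hσ⟩ := ψ.rangeRestrict.exists_rightInverse_of_surjective ψ.range_rangeRestrict
  refine ⟨LinearMap.range (V.subtype ∘ₗ σ), inferInstance, fun v hv => ?_⟩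
  set w : V := σ (ψ.rangeRestrict ⟨v, hv⟩)
  have hφw : φ w = φ v :=
    congr_arg Subtype.val (LinearMap.congr_fun hσ (ψ.rangeRestrict ⟨v, hv⟩))
  exact Submodule.mem_sup.2 ⟨v - w, ⟨V.sub_mem hv w.2, by simp [hφw]⟩, w, ⟨_, rfl⟩, by abel⟩

theorem Submodule.isClosed_of_le_sup_finiteDimensional {𝕜 E : Type*} [NontriviallyNormedField 𝕜]
    [CompleteSpace 𝕜] [AddCommGroup E] [Module 𝕜 E] [TopologicalSpace E]
    [IsTopologicalAddGroup E] [ContinuousSMul 𝕜 E] [T2Space E] {W V F : Submodule 𝕜 E}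
    [FiniteDimensional 𝕜 F] (hW : IsClosed (W : Set E)) (hWV : W ≤ V) (hVF : V ≤ W ⊔ F) :
    IsClosed (V : Set E) := by
  have hV : V = W ⊔ F ⊓ V := by rw [← sup_inf_assoc_of_le _ hWV, inf_eq_right.2 hVF]
  rw [hV]
  exact W.isClosed_sup_finiteDimensional _ hW

theorem AffineSubspace.mem_of_lineMap_mem {K V P : Type*} [Field K] [AddCommGroup V] [Module K V]
    [AddTorsor V P] (s : AffineSubspace K P) {z x : P} {t : K} (hz : z ∈ s) (ht : t ≠ 0)
    (h : AffineMap.lineMap z x t ∈ s) : x ∈ s := by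
  have := s.smul_vsub_vadd_mem t⁻¹ h hz hz
  rwa [AffineMap.lineMap_vsub_left, inv_smul_smul₀ ht, vsub_vadd] at this

section Field

variable {K E : Type*} [Field K] [AddCommGroup E] [Module K E]

theorem vectorSpan_sub {s t : Set E} (hs : s.Nonempty) (ht : t.Nonempty) :
    vectorSpan K (s - t) = vectorSpan K s ⊔ vectorSpan K t := by
  obtain ⟨x₀, hx₀⟩ := hs
  obtain ⟨y₀, hy₀⟩ := ht
  apply le_antisymm
  · rw [vectorSpan_def, Submodule.span_le]
    rintro _ ⟨_, ⟨x, hx, y, hy, rfl⟩, _, ⟨x', hx', y', hy', rfl⟩, rfl⟩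
    have : x - y -ᵥ (x' - y') = (x -ᵥ x') - (y -ᵥ y') := by simp only [vsub_eq_sub]; abel
    dsimp only
    rw [SetLike.mem_coe, this]
    exact Submodule.sub_mem _ (Submodule.mem_sup_left (vsub_mem_vectorSpan K hx hx'))
      (Submodule.mem_sup_right (vsub_mem_vectorSpan K hy hy'))
  · refine sup_le ?_ ?_ <;> rw [vectorSpan_def, Submodule.span_le]
    · rintro _ ⟨x, hx, x', hx', rfl⟩
      have : x -ᵥ x' = (x - y₀) -ᵥ (x' - y₀) := by simp only [vsub_eq_sub]; abel
      dsimp only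
      rw [this]
      exact vsub_mem_vectorSpan K (Set.sub_mem_sub hx hy₀) (Set.sub_mem_sub hx' hy₀)
    · rintro _ ⟨y, hy, y', hy', rfl⟩
      have : y -ᵥ y' = (x₀ - y') -ᵥ (x₀ - y) := by simp only [vsub_eq_sub]; abel
      dsimp only
      rw [this]
      exact vsub_mem_vectorSpan K (Set.sub_mem_sub hx₀ hy') (Set.sub_mem_sub hx₀ hy)

theorem AffineSubspace.coe_sub_coe {L₁ L₂ : AffineSubspace K E} {d₁ d₂ : E} (h₁ : d₁ ∈ L₁)
    (h₂ : d₂ ∈ L₂) :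
    (L₁ : Set E) - L₂ = AffineSubspace.mk' (d₁ - d₂) (L₁.direction ⊔ L₂.direction) := by
  ext x
  simp only [Set.mem_sub, SetLike.mem_coe, AffineSubspace.mem_mk', vsub_eq_sub]
  constructor
  · rintro ⟨a, ha, c, hc, rfl⟩
    have : a - c - (d₁ - d₂) = (a -ᵥ d₁) - (c -ᵥ d₂) := by simp only [vsub_eq_sub]; abel
    rw [this]
    exact Submodule.sub_mem _ (Submodule.mem_sup_left (L₁.vsub_mem_direction ha h₁))
      (Submodule.mem_sup_right (L₂.vsub_mem_direction hc h₂))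
  · intro hx
    obtain ⟨v₁, hv₁, v₂, hv₂, hv⟩ := Submodule.mem_sup.1 hx
    refine ⟨v₁ +ᵥ d₁, L₁.vadd_mem_of_mem_direction hv₁ h₁, -v₂ +ᵥ d₂,
      L₂.vadd_mem_of_mem_direction (Submodule.neg_mem _ hv₂) h₂, ?_⟩
    have hx' : x = v₁ + v₂ + (d₁ - d₂) := by rw [hv]; abel
    rw [hx', vadd_eq_add, vadd_eq_add]
    abel

end Field

section RealVectorSpace

variable {X : Type*} [AddCommGroup X] [Module ℝ X]

theorem Convex.exists_forall_lt {ι : Type*} {S : Set X} (hS : Convex ℝ S) (hne : S.Nonempty)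
    (f : ι → X →ₗ[ℝ] ℝ) (c : ι → ℝ) (s : Finset ι)
    (hle : ∀ i ∈ s, ∀ x ∈ S, f i x ≤ c i) (hlt : ∀ i ∈ s, ∃ x ∈ S, f i x < c i) :
    ∃ z ∈ S, ∀ i ∈ s, f i z < c i := by
  classical
  induction s using Finset.induction_on with
  | empty => exact hne.imp fun z hz => ⟨hz, by simp⟩
  | insert j s _ ih =>
    obtain ⟨z, hzS, hz⟩ := ih (fun i hi => hle i (by simp [hi]))
      (fun i hi => hlt i (by simp [hi]))
    obtain ⟨y, hyS, hy⟩ := hlt j (by simp)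
    -- the midpoint is strict wherever one of its endpoints is
    refine ⟨(1 / 2 : ℝ) • y + (1 / 2 : ℝ) • z, hS hyS hzS (by norm_num) (by norm_num) (by norm_num),
      fun i hi => ?_⟩
    have hyi := hle i hi y hyS
    have hzi := hle i hi z hzS
    simp only [map_add, map_smul, smul_eq_mul]
    rcases Finset.mem_insert.1 hi with rfl | hi
    · linarith
    · linarith [hz i hi]

theorem eventually_lineMap_mem_of_lt_or_eq {ι : Type*} [Finite ι]
    (M : AffineSubspace ℝ X) (g : ι → X →ₗ[ℝ] ℝ) (b : ι → ℝ) {z x : X} (hz : z ∈ M) (hx : x ∈ M)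
    (hzx : ∀ i, g i z < b i ∨ g i z = b i ∧ g i x = b i) :
    ∀ᶠ t in 𝓝 (0 : ℝ), AffineMap.lineMap z x t ∈ M ∧ ∀ i, g i (AffineMap.lineMap z x t) ≤ b i := by
  refine (Eventually.of_forall fun t => AffineMap.lineMap_mem t hz hx).and
    (eventually_all.2 fun i => ?_)
  have hline : ∀ t : ℝ, g i (AffineMap.lineMap z x t) = AffineMap.lineMap (g i z) (g i x) t :=
    fun t => by simp [AffineMap.lineMap_apply_module]
  simp only [hline]
  rcases hzx i with hlt | ⟨hz, hx⟩
  · have hcont : Continuous fun t : ℝ => AffineMap.lineMap (g i z) (g i x) t := by fun_prop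
    have := hcont.tendsto 0
    simp only [AffineMap.lineMap_apply_zero] at this
    exact (this.eventually_lt_const hlt).mono fun t ht => ht.le
  · exact .of_forall fun t => by simp [hz, hx]

theorem coe_affineSpan_eq_setOf_active {ι : Type*} [Finite ι] {S : Set X}
    (M : AffineSubspace ℝ X) (g : ι → X →ₗ[ℝ] ℝ) (b : ι → ℝ)
    (hS : S = {x | x ∈ M ∧ ∀ i, g i x ≤ b i}) (hne : S.Nonempty) :
    (affineSpan ℝ S : Set X) = {x | x ∈ M ∧ ∀ i, (∀ y ∈ S, g i y = b i) → g i x = b i} := by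
  classical
  have hSM : S ⊆ M := hS ▸ fun y hy => hy.1
  have hSb : ∀ i, ∀ y ∈ S, g i y ≤ b i := hS ▸ fun i y hy => hy.2 i
  have hconv : Convex ℝ S := by
    have : S = (M : Set X) ∩ ⋂ i, {w | g i w ≤ b i} := by ext; simp [hS]
    exact this ▸ M.convex.inter (convex_iInter fun i => convex_halfSpace_le (g i).isLinear (b i))
  ext x
  constructor
  · intro hx
    exact ⟨affineSpan_le.2 hSM hx, fun i hi =>
      AffineMap.eqOn_affineSpan (f := (g i).toAffineMap) (g := AffineMap.const ℝ X (b i)) hi hx⟩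
  · rintro ⟨hxM, hxa⟩
    obtain ⟨z, hzS, hz⟩ := hconv.exists_forall_lt hne g b
      (Set.toFinite {i | ¬ ∀ y ∈ S, g i y = b i}).toFinset (fun i _ => hSb i) fun i hi => by
        simp only [Set.Finite.mem_toFinset, Set.mem_ofPred_eq, not_forall] at hi
        obtain ⟨y, hyS, hy⟩ := hi
        exact ⟨y, hyS, (hSb i y hyS).lt_of_ne hy⟩
    have hzx : ∀ i, g i z < b i ∨ g i z = b i ∧ g i x = b i := fun i => by
      by_cases hi : ∀ y ∈ S, g i y = b i
      · exact .inr ⟨hi z hzS, hxa i hi⟩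
      · exact .inl (hz i (by simpa using hi))
    obtain ⟨t, htS, ht⟩ := ((eventually_lineMap_mem_of_lt_or_eq M g b (hSM hzS) hxM hzx).filter_mono
      nhdsWithin_le_nhds |>.and (self_mem_nhdsWithin (s := {0}ᶜ))).exists
    exact (affineSpan ℝ S).mem_of_lineMap_mem (subset_affineSpan ℝ S hzS) ht
      (subset_affineSpan ℝ S (hS ▸ htS))

theorem AffineSubspace.direction_inf_ker_pi_le_vectorSpan {ι : Type*} (L : AffineSubspace ℝ X)
    (f : ι → X →ₗ[ℝ] ℝ) (a : ι → ℝ) {d : X}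
    (hd : d ∈ (L : Set X) ∩ {x | ∀ i, f i x ≤ a i}) :
    L.direction ⊓ LinearMap.ker (LinearMap.pi f) ≤
      vectorSpan ℝ ((L : Set X) ∩ {x | ∀ i, f i x ≤ a i}) := by
  rintro v ⟨hvL, hvf⟩
  have hfv : ∀ i, f i v = 0 := fun i => congr_fun (LinearMap.mem_ker.1 hvf) i
  have hvd : v +ᵥ d ∈ (L : Set X) ∩ {x | ∀ i, f i x ≤ a i} :=
    ⟨L.vadd_mem_of_mem_direction hvL hd.1, fun i => by simpa [hfv i] using hd.2 i⟩
  simpa using vsub_mem_vectorSpan ℝ hvd hd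

end RealVectorSpace

theorem AffineSubspace.isGPCS_of_isClosed {X : Type*} [AddCommGroup X] [Module ℝ X]
    [TopologicalSpace X] (L : AffineSubspace ℝ X) (hL : IsClosed (L : Set X)) :
    IsGPCS (L : Set X) :=
  ⟨0, Fin.elim0, Fin.elim0, L, hL, by simp⟩

theorem IsGPCS.isClosed_vectorSpan {X : Type*} [AddCommGroup X] [Module ℝ X] [TopologicalSpace X]
    [IsTopologicalAddGroup X] [T1Space X] {S : Set X} (hS : IsGPCS S) :
    IsClosed (vectorSpan ℝ S : Set X) := by
  obtain ⟨p, g, b, M, hM, hS⟩ := hS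
  rw [← direction_affineSpan, AffineSubspace.isClosed_direction_iff]
  rcases S.eq_empty_or_nonempty with rfl | hne
  · simp
  rw [coe_affineSpan_eq_setOf_active M (fun i => g i) b hS hne]
  simp only [Set.ofPred_and, Set.ofPred_forall]
  exact hM.inter (isClosed_iInter fun i => isClosed_iInter fun _ =>
    isClosed_eq (g i).continuous continuous_const)

theorem diff_of_affine_subspaces_gpcs_general
    {X : Type*}
    [AddCommGroup X] [Module ℝ X] [TopologicalSpace X] [IsTopologicalAddGroup X]
    [ContinuousSMul ℝ X] [T2Space X]
    (L₁ L₂ : AffineSubspace ℝ X)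
    (P₁ P₂ : Set X) (hP₁ : IsPCS P₁) (hP₂ : IsPCS P₂)
    (hD₁ : ((L₁ : Set X) ∩ P₁).Nonempty) (hD₂ : ((L₂ : Set X) ∩ P₂).Nonempty)
    (h : IsGPCS ((L₁ : Set X) ∩ P₁ - (L₂ : Set X) ∩ P₂)) :
    IsGPCS ((L₁ : Set X) - (L₂ : Set X)) := by
  obtain ⟨p₁, f₁, a₁, rfl⟩ := hP₁
  obtain ⟨p₂, f₂, a₂, rfl⟩ := hP₂
  set D₁ := (L₁ : Set X) ∩ {x | ∀ i, f₁ i x ≤ a₁ i}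
  set D₂ := (L₂ : Set X) ∩ {x | ∀ i, f₂ i x ≤ a₂ i}
  set V := L₁.direction ⊔ L₂.direction
  have hW : vectorSpan ℝ (D₁ - D₂) = vectorSpan ℝ D₁ ⊔ vectorSpan ℝ D₂ := vectorSpan_sub hD₁ hD₂
  obtain ⟨d₁, hd₁⟩ := hD₁
  obtain ⟨d₂, hd₂⟩ := hD₂
  obtain ⟨F₁, _, hF₁⟩ := L₁.direction.exists_finiteDimensional_le_inf_ker_sup
    (LinearMap.pi fun i => (f₁ i : X →ₗ[ℝ] ℝ))
  obtain ⟨F₂, _, hF₂⟩ := L₂.direction.exists_finiteDimensional_le_inf_ker_sup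
    (LinearMap.pi fun i => (f₂ i : X →ₗ[ℝ] ℝ))
  have h₁ := L₁.direction_inf_ker_pi_le_vectorSpan (fun i => (f₁ i : X →ₗ[ℝ] ℝ)) a₁ hd₁
  have h₂ := L₂.direction_inf_ker_pi_le_vectorSpan (fun i => (f₂ i : X →ₗ[ℝ] ℝ)) a₂ hd₂
  have hWV : vectorSpan ℝ (D₁ - D₂) ≤ V := hW ▸
    sup_le_sup (vectorSpan_mono ℝ Set.inter_subset_left) (vectorSpan_mono ℝ Set.inter_subset_left)
  have hVW : V ≤ vectorSpan ℝ (D₁ - D₂) ⊔ (F₁ ⊔ F₂) := hW ▸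
    sup_le (hF₁.trans (sup_le_sup (h₁.trans le_sup_left) le_sup_left))
      (hF₂.trans (sup_le_sup (h₂.trans le_sup_right) le_sup_right))
  have hV : IsClosed (V : Set X) :=
    Submodule.isClosed_of_le_sup_finiteDimensional h.isClosed_vectorSpan hWV hVW
  rw [AffineSubspace.coe_sub_coe hd₁.1 hd₂.1]
  exact AffineSubspace.isGPCS_of_isClosed _
    ((AffineSubspace.isClosed_direction_iff _).1 (by rwa [AffineSubspace.direction_mk']))

/-- Let `L₁, L₂` be closed affine subspaces and `P₁, P₂` polyhedral convex sets in `X`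
such that `D₁ = L₁ ∩ P₁` and `D₂ = L₂ ∩ P₂` are nonempty.  If `D₁ − D₂` is a generalized
polyhedral convex set, then so is `L₁ − L₂`. -/
theorem diff_of_affine_subspaces_gpcs
    {X : Type*}
    [AddCommGroup X] [Module ℝ X] [TopologicalSpace X] [IsTopologicalAddGroup X]
    [ContinuousSMul ℝ X] [LocallyConvexSpace ℝ X] [T2Space X]
    (L₁ L₂ : AffineSubspace ℝ X)
    (hL₁ : IsClosed (L₁ : Set X)) (hL₂ : IsClosed (L₂ : Set X))
    (P₁ P₂ : Set X) (hP₁ : IsPCS P₁) (hP₂ : IsPCS P₂)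
    (hD₁ : ((L₁ : Set X) ∩ P₁).Nonempty) (hD₂ : ((L₂ : Set X) ∩ P₂).Nonempty)
    (h : IsGPCS ((L₁ : Set X) ∩ P₁ - (L₂ : Set X) ∩ P₂)) :
    IsGPCS ((L₁ : Set X) - (L₂ : Set X)) :=
  diff_of_affine_subspaces_gpcs_general L₁ L₂ P₁ P₂ hP₁ hP₂ hD₁ hD₂ h
end

section
/- Let f be a proper generalized polyhedral convex function with f(x) = max{⟨v_k*, x⟩ + β_k : k = 1,…,m} on dom f, and let x ∈ dom f. Then the directional derivative of f at x satisfies: f′(x; h) = max{⟨v_k*, h⟩ : k ∈ Θ(x)} if h ∈ cone(dom f − x), and f′(x; h) = +∞ if h ∉ cone(dom f − x), where Θ(x) = {k ∈ {1,…,m} : ⟨v_k*, x⟩ + β_k = f(x)}. -/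
open scoped Pointwise

/-- The convex cone generated by a set (all finite nonnegative combinations, including `0`). -/
def coneGen {E : Type*} [AddCommGroup E] [Module ℝ E] (s : Set E) : Set E :=
  {y | ∃ (n : ℕ) (c : Fin n → ℝ) (w : Fin n → E),
    (∀ i, 0 ≤ c i) ∧ (∀ i, w i ∈ s) ∧ y = ∑ i, c i • w i}

/-! Along a direction `h` of the cone, the domain contains a segment `x + (0, t₀] • h`: the
affine constraint holds along the whole line, the inequality constraints active at `x` are
non-increasing along `h`, and the inactive ones stay strict for small `t`. On that segment `f`
is the maximum of the affine functions `t ↦ ⟨vₖ, x⟩ + βₖ + t ⟨vₖ, h⟩`, which for small `t`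
equals `f x + t M` with `M = max_{k ∈ Θ(x)} ⟨vₖ, h⟩`, and is `≥ f x + t M` for every `t` (take
`k ∈ Θ(x)` attaining `M`). So the infimum of the difference quotients is `M`, and is attained.
Off the cone, `x + t • h ∉ dom f` for every `t > 0`, so every difference quotient is `+∞`. -/

open Filter Topology

section ConeGen

variable {E : Type*} [AddCommGroup E] [Module ℝ E]

theorem coneGen_subset_span (s : Set E) : coneGen s ⊆ Submodule.span ℝ s := by
  rintro y ⟨n, c, w, -, hw, rfl⟩
  exact Submodule.sum_mem _ fun i _ => Submodule.smul_mem _ _ (Submodule.subset_span (hw i))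

theorem map_nonpos_of_mem_coneGen {F : Type*} [FunLike F E ℝ] [LinearMapClass F ℝ E ℝ]
    {s : Set E} (φ : F) (hφ : ∀ w ∈ s, φ w ≤ 0) {y : E} (hy : y ∈ coneGen s) : φ y ≤ 0 := by
  obtain ⟨n, c, w, hc, hw, rfl⟩ := hy
  rw [map_sum]
  refine Finset.sum_nonpos fun i _ => ?_
  rw [map_smul, smul_eq_mul]
  exact mul_nonpos_of_nonneg_of_nonpos (hc i) (hφ _ (hw i))

theorem mem_coneGen_sub_singleton {S : Set E} {x h : E} {t : ℝ} (ht : 0 < t)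
    (hmem : x + t • h ∈ S) : h ∈ coneGen (S - {x}) := by
  refine ⟨1, fun _ => t⁻¹, fun _ => (x + t • h) - x, fun _ => (inv_pos.2 ht).le,
    fun _ => Set.sub_mem_sub hmem rfl, ?_⟩
  rw [Fin.sum_univ_one, add_sub_cancel_left, smul_smul, inv_mul_cancel₀ ht.ne', one_smul]

end ConeGen

theorem eventually_add_mul_le_add_mul {a b c d : ℝ} (hab : a ≤ b) (hcd : a = b → c ≤ d) :
    ∀ᶠ t in 𝓝[>] (0 : ℝ), a + t * c ≤ b + t * d := by
  rcases hab.lt_or_eq with hlt | heq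
  · refine nhdsWithin_le_nhds ?_
    filter_upwards [ContinuousAt.eventually_lt (f := fun t : ℝ => a + t * c)
      (g := fun t : ℝ => b + t * d) (by fun_prop) (by fun_prop) (by simpa using hlt)]
      with t ht using ht.le
  · filter_upwards [self_mem_nhdsWithin] with t (ht : 0 < t)
    rw [heq]
    gcongr
    exact hcd heq

theorem IsGPCS.eventually_add_smul_mem_s11 {X : Type*} [AddCommGroup X] [Module ℝ X]
    [TopologicalSpace X] {S : Set X} (hS : IsGPCS S) {x h : X} (hx : x ∈ S)
    (hh : h ∈ coneGen (S - {x})) : ∀ᶠ t in 𝓝[>] (0 : ℝ), x + t • h ∈ S := by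
  obtain ⟨p, φ, α, L, -, rfl⟩ := hS
  have hdir : h ∈ L.direction := by
    refine Submodule.span_le.2 ?_ (coneGen_subset_span _ hh)
    rintro _ ⟨u, hu, _, rfl, rfl⟩
    exact AffineSubspace.vsub_mem_direction hu.1 hx.1
  have hineq : ∀ i, ∀ᶠ t in 𝓝[>] (0 : ℝ), φ i x + t * φ i h ≤ α i + t * 0 := by
    refine fun i => eventually_add_mul_le_add_mul (hx.2 i) fun hxi => ?_
    refine map_nonpos_of_mem_coneGen (φ i) ?_ hh
    rintro _ ⟨u, hu, _, rfl, rfl⟩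
    rw [map_sub, hxi, sub_nonpos]
    exact hu.2 i
  filter_upwards [eventually_all.2 hineq] with t ht
  refine ⟨?_, fun i => ?_⟩
  · simpa [add_comm] using
      AffineSubspace.vadd_mem_of_mem_direction (L.direction.smul_mem t hdir) hx.1
  · simpa using ht i

section MaxOfAffine

variable {ι : Type*} [Fintype ι] [Nonempty ι]

-- `Θ(x)` of the paper is `maxIndices fun k => ⟨vₖ, x⟩ + βₖ`.
noncomputable def maxIndices (a : ι → ℝ) : Finset ι :=
  Finset.univ.filter fun k => a k = Finset.univ.sup' Finset.univ_nonempty a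

theorem maxIndices_nonempty (a : ι → ℝ) : (maxIndices a).Nonempty := by
  obtain ⟨k, -, hk⟩ := Finset.exists_mem_eq_sup' Finset.univ_nonempty a
  exact ⟨k, Finset.mem_filter.2 ⟨Finset.mem_univ k, hk.symm⟩⟩

theorem sup'_add_mul_sup'_maxIndices_le (a d : ι → ℝ) (t : ℝ) :
    Finset.univ.sup' Finset.univ_nonempty a + t * (maxIndices a).sup' (maxIndices_nonempty a) d
      ≤ Finset.univ.sup' Finset.univ_nonempty fun k => a k + t * d k := by
  obtain ⟨k, hk, hdk⟩ := Finset.exists_mem_eq_sup' (maxIndices_nonempty a) d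
  rw [hdk, (Finset.mem_filter.1 hk).2.symm]
  exact Finset.le_sup' (fun k => a k + t * d k) (Finset.mem_univ k)

theorem eventually_sup'_add_mul_eq (a d : ι → ℝ) :
    ∀ᶠ t in 𝓝[>] (0 : ℝ), (Finset.univ.sup' Finset.univ_nonempty fun k => a k + t * d k) =
      Finset.univ.sup' Finset.univ_nonempty a +
        t * (maxIndices a).sup' (maxIndices_nonempty a) d := by
  have hle : ∀ k, ∀ᶠ t in 𝓝[>] (0 : ℝ), a k + t * d k ≤
      Finset.univ.sup' Finset.univ_nonempty a +
        t * (maxIndices a).sup' (maxIndices_nonempty a) d :=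
    fun k => eventually_add_mul_le_add_mul (Finset.le_sup' a (Finset.mem_univ k)) fun hk =>
      Finset.le_sup' d (Finset.mem_filter.2 ⟨Finset.mem_univ k, hk⟩)
  filter_upwards [eventually_all.2 hle] with t ht
  exact le_antisymm (Finset.sup'_le _ _ fun k _ => ht k)
    (sup'_add_mul_sup'_maxIndices_le a d t)

end MaxOfAffine

theorem EReal.coe_finset_sup' {ι : Type*} {s : Finset ι} (hs : s.Nonempty) (d : ι → ℝ) :
    ((s.sup' hs d : ℝ) : EReal) = ⨆ k ∈ s, ((d k : ℝ) : EReal) := by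
  rw [← Finset.sup_eq_iSup, ← Finset.sup'_eq_sup hs,
    Finset.apply_sup'_eq_sup'_comp hs _ fun a b => EReal.coe_strictMono.monotone.map_max]
  rfl

section DiffQuotient

variable {X : Type*} [AddCommGroup X] [Module ℝ X] {S : Set X} {F : X → EReal} {G : X → ℝ}
  {x h : X}

theorem iInf_inv_mul_sub_eq_coe (hF : ∀ y ∈ S, F y = G y) (hF' : ∀ y ∉ S, F y = ⊤)
    (hx : x ∈ S) {M : ℝ} (hle : ∀ t : ℝ, G x + t * M ≤ G (x + t • h))
    (heq : ∃ t > 0, x + t • h ∈ S ∧ G (x + t • h) = G x + t * M) :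
    ⨅ t : {t : ℝ // 0 < t}, (((t : ℝ)⁻¹ : ℝ) : EReal) * (F (x + (t : ℝ) • h) - F x) = M := by
  obtain ⟨t₀, ht₀, hmem₀, hG₀⟩ := heq
  refine le_antisymm (iInf_le_of_le ⟨t₀, ht₀⟩ (le_of_eq ?_)) (le_iInf fun ⟨t, ht⟩ => ?_)
  · rw [hF _ hmem₀, hF x hx, hG₀, ← EReal.coe_sub, ← EReal.coe_mul, add_sub_cancel_left,
      inv_mul_cancel_left₀ ht₀.ne']
  by_cases hmem : x + t • h ∈ S
  · rw [hF _ hmem, hF x hx, ← EReal.coe_sub, ← EReal.coe_mul, EReal.coe_le_coe_iff,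
      le_inv_mul_iff₀ ht]
    linarith [hle t]
  · rw [hF' _ hmem, hF x hx, EReal.top_sub_coe, EReal.coe_mul_top_of_pos (inv_pos.2 ht)]
    exact le_top

theorem iInf_inv_mul_sub_eq_top (hF : ∀ y ∈ S, F y = G y) (hF' : ∀ y ∉ S, F y = ⊤)
    (hx : x ∈ S) (hout : ∀ t : ℝ, 0 < t → x + t • h ∉ S) :
    ⨅ t : {t : ℝ // 0 < t}, (((t : ℝ)⁻¹ : ℝ) : EReal) * (F (x + (t : ℝ) • h) - F x) = ⊤ := by
  refine iInf_eq_top.2 fun ⟨t, ht⟩ => ?_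
  rw [hF' _ (hout t ht), hF x hx, EReal.top_sub_coe,
    EReal.coe_mul_top_of_pos (inv_pos.2 ht)]

end DiffQuotient

theorem directional_derivative_of_gpcf_general
    {X : Type*}
    [AddCommGroup X] [Module ℝ X] [TopologicalSpace X]
    (domf : Set X) (hdomf : IsGPCS domf)
    (m : ℕ) (v : Fin (m + 1) → X →L[ℝ] ℝ) (β : Fin (m + 1) → ℝ)
    (f : X → EReal)
    (hf : ∀ x ∈ domf,
      f x = ((Finset.univ.sup' Finset.univ_nonempty fun k => v k x + β k : ℝ) : EReal))
    (hf' : ∀ x ∉ domf, f x = ⊤)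
    (x : X) (hx : x ∈ domf)
    (fdir : X → EReal)
    (hfdir : ∀ h : X, fdir h =
      ⨅ t : {t : ℝ // 0 < t}, (((t : ℝ)⁻¹ : ℝ) : EReal) * (f (x + (t : ℝ) • h) - f x)) :
    ∀ h : X,
      (h ∈ coneGen (domf - {x}) →
        fdir h = ⨆ k ∈ {k : Fin (m + 1) | ((v k x + β k : ℝ) : EReal) = f x},
          ((v k h : ℝ) : EReal)) ∧
      (h ∉ coneGen (domf - {x}) → fdir h = ⊤) := by
  intro h
  set a : Fin (m + 1) → ℝ := fun k => v k x + β k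
  have hline : ∀ t : ℝ, (fun k => v k (x + t • h) + β k) = fun k => a k + t * v k h := by
    intro t; ext k; simp only [a, map_add, map_smul, smul_eq_mul]; ring
  refine ⟨fun hh => ?_, fun hh => ?_⟩
  · have hactive : {k | ((a k : ℝ) : EReal) = f x} = (maxIndices a : Set (Fin (m + 1))) := by
      ext k
      simp only [maxIndices, Finset.coe_filter, Finset.mem_univ, true_and, Set.mem_ofPred_eq,
        hf x hx, EReal.coe_eq_coe_iff, a]
    rw [hfdir, hactive, Finset.iSup_coe, ← EReal.coe_finset_sup' (maxIndices_nonempty a)]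
    refine iInf_inv_mul_sub_eq_coe (G := fun y => Finset.univ.sup' _ fun k => v k y + β k)
      hf hf' hx (fun t => ?_) ?_
    · simpa only [hline] using sup'_add_mul_sup'_maxIndices_le a (fun k => v k h) t
    · obtain ⟨t, ⟨ht, hmem⟩, hG⟩ := ((eventually_mem_nhdsWithin.and
        (hdomf.eventually_add_smul_mem_s11 hx hh)).and
        (eventually_sup'_add_mul_eq a fun k => v k h)).exists
      exact ⟨t, ht, hmem, by simpa only [hline] using hG⟩
  · rw [hfdir]
    exact iInf_inv_mul_sub_eq_top hf hf' hx fun t ht hmem =>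
      hh (mem_coneGen_sub_singleton ht hmem)

/-- **Directional derivative formula.**  Let `f` be a proper generalized polyhedral convex
function, `f = max {⟨vₖ, ·⟩ + βₖ}` on its nonempty generalized polyhedral convex domain,
`+∞` elsewhere, and let `x ∈ dom f`.  Then the directional derivative
`f′(x; h) = inf_{t > 0} (f(x + t h) − f(x)) / t` equals `max {⟨vₖ, h⟩ : k ∈ Θ(x)}` if
`h ∈ cone (dom f − x)`, and equals `+∞` otherwise, where
`Θ(x) = {k | ⟨vₖ, x⟩ + βₖ = f(x)}`. -/
theorem directional_derivative_of_gpcf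
    {X : Type*}
    [AddCommGroup X] [Module ℝ X] [TopologicalSpace X] [IsTopologicalAddGroup X]
    [ContinuousSMul ℝ X] [LocallyConvexSpace ℝ X] [T2Space X]
    (domf : Set X) (hdomf : IsGPCS domf) (hdomne : domf.Nonempty)
    (m : ℕ) (v : Fin (m + 1) → X →L[ℝ] ℝ) (β : Fin (m + 1) → ℝ)
    (f : X → EReal)
    (hf : ∀ x ∈ domf,
      f x = ((Finset.univ.sup' Finset.univ_nonempty fun k => v k x + β k : ℝ) : EReal))
    (hf' : ∀ x ∉ domf, f x = ⊤)
    (x : X) (hx : x ∈ domf)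
    (fdir : X → EReal)
    (hfdir : ∀ h : X, fdir h =
      ⨅ t : {t : ℝ // 0 < t}, (((t : ℝ)⁻¹ : ℝ) : EReal) * (f (x + (t : ℝ) • h) - f x)) :
    ∀ h : X,
      (h ∈ coneGen (domf - {x}) →
        fdir h = ⨆ k ∈ {k : Fin (m + 1) | ((v k x + β k : ℝ) : EReal) = f x},
          ((v k h : ℝ) : EReal)) ∧
      (h ∉ coneGen (domf - {x}) → fdir h = ⊤) :=
  directional_derivative_of_gpcf_general domf hdomf m v β f hf hf' x hx fdir hfdir
end
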